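/- Let $X$ be a paracompact ENR, $k \ge 0$, and let $\sigma: X \times X \to J^k_{X\times X}(PX)$ be a $\mathbb{Z}/2$-equivariant section of the fibred join $\pi_k$ of the path fibration. Then the restriction $\sigma|_{\Delta X}$ is homotopic (through sections over $\Delta X$) to the canonical section $c_k$, where $c_k(x,x) = [c_x, \tfrac{1}{k+1}, \ldots, c_x, \tfrac{1}{k+1}]$ with $c_x$ the constant path at $x$. -/

import Mathlib

open unitInterval Set

noncomputable section

/-- The space of paths in `X`: continuous maps from the unit interval. -/
abbrev PathSp (X : Type*) [TopologicalSpace X] := C(I, X)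

/-- Path reversal, the `ℤ/2`-action on the path space. -/
def pathRev {X : Type*} [TopologicalSpace X] (γ : PathSp X) : PathSp X :=
  γ.comp ⟨unitInterval.symm, unitInterval.continuous_symm⟩

/-- The evaluation map `π : PX → X × X`, `γ ↦ (γ 0, γ 1)`. -/
def evalMap (X : Type*) [TopologicalSpace X] : PathSp X → X × X :=
  fun γ => (γ 0, γ 1)

/-- `σ` is a local section of the evaluation map on `U ⊆ X × X` which is equivariant
with respect to transposition and path reversal. -/
def IsSymSection {X : Type*} [TopologicalSpace X] (U : Set (X × X))
    (sec : C(U, PathSp X)) : Prop :=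
  (∀ u : U, sec u 0 = (u : X × X).1 ∧ sec u 1 = (u : X × X).2) ∧
  (∀ (u : U) (hs : Prod.swap (u : X × X) ∈ U) (t : I),
      sec ⟨Prod.swap (u : X × X), hs⟩ t = sec u (unitInterval.symm t))

/-- `TCΣ(X) ≤ k` : there is a cover of `X × X` by `k+1` invariant open sets,
each admitting an equivariant local section of the evaluation map. -/
def TCSigma_le (X : Type*) [TopologicalSpace X] (k : ℕ) : Prop :=
  ∃ U : Fin (k + 1) → Set (X × X),
    (∀ i, IsOpen (U i)) ∧
    (∀ i, ∀ p ∈ U i, Prod.swap p ∈ U i) ∧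
    (⋃ i, U i) = Set.univ ∧
    (∀ i, ∃ sec : C(U i, PathSp X), IsSymSection (U i) sec)

/-- The symmetrized topological complexity, as an extended natural number. -/
def TCSigma (X : Type*) [TopologicalSpace X] : ℕ∞ :=
  sInf {n : ℕ∞ | ∃ k : ℕ, n = k ∧ TCSigma_le X k}

/-- `TC^{M,Σ}(X) ≤ k`: as for `TCΣ` but each set of the cover contains the diagonal and the
sections are constant on the diagonal. -/
def TCMSigma_le (X : Type*) [TopologicalSpace X] (k : ℕ) : Prop :=
  ∃ U : Fin (k + 1) → Set (X × X),
    (∀ i, IsOpen (U i)) ∧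
    (∀ i, ∀ p ∈ U i, Prod.swap p ∈ U i) ∧
    (∀ i (x : X), (x, x) ∈ U i) ∧
    (⋃ i, U i) = Set.univ ∧
    (∀ i, ∃ sec : C(U i, PathSp X), IsSymSection (U i) sec ∧
      ∀ (x : X) (h : (x, x) ∈ U i) (t : I), sec ⟨(x, x), h⟩ t = x)

/-- The monoidal symmetrized topological complexity, as an extended natural number. -/
def TCMSigma (X : Type*) [TopologicalSpace X] : ℕ∞ :=
  sInf {n : ℕ∞ | ∃ k : ℕ, n = k ∧ TCMSigma_le X k}
/-! ### Fibred joins -/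

/-- Pre-join data: `k+1` points of `E` in a common fibre of `p`, with join coordinates. -/
abbrev JoinPre {E B : Type*} (p : E → B) (k : ℕ) : Type _ :=
  {x : (Fin (k + 1) → E) × (Fin (k + 1) → I) //
    (∀ i j, p (x.1 i) = p (x.1 j)) ∧ (∑ i, ((x.2 i : ℝ))) = 1}

/-- Tuples are identified if the join coordinates agree and the points agree wherever
the join coordinate is nonzero. -/
def joinRel {E B : Type*} (p : E → B) (k : ℕ) (a b : JoinPre p k) : Prop :=
  a.1.2 = b.1.2 ∧ ∀ i, a.1.2 i ≠ 0 → a.1.1 i = b.1.1 i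

/-- The `(k+1)`-fold fibred join `J^k_B(E)` of a map `p : E → B`. -/
def FibredJoin {E B : Type*} [TopologicalSpace E] [TopologicalSpace B]
    (p : E → B) (k : ℕ) : Type _ :=
  Quot (joinRel p k)

instance FibredJoin.instTop {E B : Type*} [TopologicalSpace E] [TopologicalSpace B]
    (p : E → B) (k : ℕ) : TopologicalSpace (FibredJoin p k) :=
  instTopologicalSpaceQuot

lemma JoinPre.exists_ne_zero {E B : Type*} {p : E → B} {k : ℕ} (a : JoinPre p k) :
    ∃ i, a.1.2 i ≠ 0 := by
  by_contra h
  push_neg at h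
  have := a.2.2
  simp only [h] at this
  norm_num at this

/-- The projection `p_k : J^k_B(E) → B`. -/
def joinProj {E B : Type*} [TopologicalSpace E] [TopologicalSpace B]
    (p : E → B) (k : ℕ) : FibredJoin p k → B :=
  Quot.lift (fun a => p (a.1.1 0)) (by
    rintro a b ⟨ht, he⟩
    obtain ⟨i, hi⟩ := a.exists_ne_zero
    have h1 : p (a.1.1 0) = p (a.1.1 i) := a.2.1 0 i
    have h2 : p (b.1.1 i) = p (b.1.1 0) := b.2.1 i 0
    simp only [h1, he i hi, h2])

/-- The class of a tuple in the fibred join. -/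
def joinMk {E B : Type*} [TopologicalSpace E] [TopologicalSpace B]
    (p : E → B) (k : ℕ) (a : JoinPre p k) : FibredJoin p k :=
  Quot.mk _ a
/-- A space is a Euclidean neighbourhood retract (ENR) if it embeds into some `ℝⁿ`
as a retract of an open subset. -/
def IsENR (X : Type*) [TopologicalSpace X] : Prop :=
  ∃ (n : ℕ) (e : X → EuclideanSpace ℝ (Fin n)) (U : Set (EuclideanSpace ℝ (Fin n))),
    Topology.IsEmbedding e ∧ IsOpen U ∧ Set.range e ⊆ U ∧
    ∃ r : U → X, Continuous r ∧ ∀ (x : X) (h : e x ∈ U), r ⟨e x, h⟩ = x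

lemma evalMap_pathRev {X : Type*} [TopologicalSpace X] (γ : PathSp X) :
    evalMap X (pathRev γ) = Prod.swap (evalMap X γ) := by
  show (γ (unitInterval.symm 0), γ (unitInterval.symm 1)) = (γ 1, γ 0)
  rw [unitInterval.symm_zero, unitInterval.symm_one]

/-- The `ℤ/2`-involution on the fibred join of the path fibration, induced by reversing
all paths. -/
def joinInvol (X : Type*) [TopologicalSpace X] (k : ℕ) :
    FibredJoin (evalMap X) k → FibredJoin (evalMap X) k :=
  Quot.map
    (fun a => ⟨((fun i => pathRev (a.1.1 i)), a.1.2),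
      ⟨fun i j => by simp only [evalMap_pathRev, a.2.1 i j], a.2.2⟩⟩)
    (by rintro a b ⟨ht, he⟩; exact ⟨ht, fun i hi => by simp only []; rw [he i hi]⟩)

/-- The canonical section of the fibred join over the diagonal, by constant paths with
equal join coordinates. -/
def joinConstSection (X : Type*) [TopologicalSpace X] (k : ℕ)
    (d : {p : X × X // p.1 = p.2}) : FibredJoin (evalMap X) k :=
  joinMk (evalMap X) k
    ⟨((fun _ => ContinuousMap.const I d.1.1),
      (fun _ => ⟨1 / (k + 1), ⟨by positivity, by
        rw [div_le_one (by positivity)]; linarith [Nat.cast_nonneg (α := ℝ) k]⟩⟩)),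
      ⟨fun i j => rfl, by
        rw [Finset.sum_const, Finset.card_univ, Fintype.card_fin]
        rw [nsmul_eq_mul, Nat.cast_add, Nat.cast_one]
        exact mul_one_div_cancel (by positivity)⟩⟩

/- Over the diagonal, equivariance forces every path carrying a nonzero join coordinate to be a
symmetric loop, `γ (1 - t) = γ t`. Such a loop equals `t ↦ γ (min t (1 - t))`, and shrinking the
argument to `u * min t (1 - t)` with `u` going from `1` to `0` contracts all these loops to the
constant loop, fibrewise over the diagonal. Once all paths are constant, the join coordinates can
be moved linearly to the barycentre without affecting well-definedness. -/

lemma joinRel_equivalence {E B : Type*} (p : E → B) (k : ℕ) : Equivalence (joinRel p k) where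
  refl _ := ⟨rfl, fun _ _ => rfl⟩
  symm h := ⟨h.1.symm, fun i hi => (h.2 i (h.1 ▸ hi)).symm⟩
  trans h₁ h₂ := ⟨h₁.1.trans h₂.1, fun i hi => (h₁.2 i hi).trans (h₂.2 i (h₁.1 ▸ hi))⟩

section PathFold

variable (X : Type*) [TopologicalSpace X]

def pathFold : C(PathSp X × I, PathSp X) :=
  ContinuousMap.curry ⟨fun q : (PathSp X × I) × I => q.1.1 (q.1.2 * min q.2 (σ q.2)), by fun_prop⟩

variable {X}

lemma pathFold_apply (γ : PathSp X) (u t : I) : pathFold X (γ, u) t = γ (u * min t (σ t)) :=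
  rfl

lemma pathFold_zero (γ : PathSp X) : pathFold X (γ, 0) = ContinuousMap.const I (γ 0) := by
  ext t
  simp [pathFold_apply]

lemma pathFold_one_of_pathRev_eq {γ : PathSp X} (hγ : pathRev γ = γ) : pathFold X (γ, 1) = γ := by
  ext t
  rw [pathFold_apply, one_mul]
  rcases min_choice t (σ t) with h | h <;> rw [h]
  exact (DFunLike.congr_fun hγ t : γ (σ t) = γ t)

lemma evalMap_pathFold (γ : PathSp X) (u : I) : evalMap X (pathFold X (γ, u)) = (γ 0, γ 0) := by
  simp [evalMap, pathFold_apply]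

end PathFold

def joinWeight (k : ℕ) (w t : I) : I :=
  ⟨w * t + (1 - w) / (k + 1), by
    have hk : (1 : ℝ) ≤ k + 1 := by linarith [(k.cast_nonneg : (0 : ℝ) ≤ k)]
    have hd : (1 - w : ℝ) / (k + 1) ≤ 1 - w := div_le_self (by linarith [w.2.2]) hk
    have hd₀ : (0 : ℝ) ≤ (1 - w) / (k + 1) := div_nonneg (by linarith [w.2.2]) (by linarith)
    constructor <;> nlinarith [w.2.1, w.2.2, t.2.1, t.2.2]⟩

lemma joinWeight_one (k : ℕ) (t : I) : joinWeight k 1 t = t := by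
  ext
  simp [joinWeight]

lemma coe_joinWeight_zero (k : ℕ) (t : I) : (joinWeight k 0 t : ℝ) = 1 / (k + 1) := by
  simp [joinWeight]

lemma sum_joinWeight {k : ℕ} (w : I) {t : Fin (k + 1) → I} (ht : ∑ i, (t i : ℝ) = 1) :
    ∑ i, (joinWeight k w (t i) : ℝ) = 1 := by
  simp only [joinWeight, Finset.sum_add_distrib, ← Finset.mul_sum, ht, Finset.sum_const,
    Finset.card_univ, Fintype.card_fin, nsmul_eq_mul]
  push_cast
  field_simp
  ring

section FoldToConst

def shrinkParam (s : I) : I := projIcc 0 1 zero_le_one (1 - 2 * s)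

def weightParam (s : I) : I := projIcc 0 1 zero_le_one (2 - 2 * s)

lemma continuous_shrinkParam : Continuous shrinkParam :=
  continuous_projIcc.comp (by fun_prop)

lemma continuous_weightParam : Continuous weightParam :=
  continuous_projIcc.comp (by fun_prop)

lemma shrinkParam_eq_zero_of_weightParam_ne_one {s : I} (h : weightParam s ≠ 1) :
    shrinkParam s = 0 := by
  have hs : (1 : ℝ) < 2 * s := by
    by_contra! hs
    exact h (projIcc_of_right_le _ (by linarith))
  exact projIcc_of_le_left _ (by linarith)

variable (X : Type*) [TopologicalSpace X] (k : ℕ)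

def foldToConstPre (a : JoinPre (evalMap X) k) (s : I) : JoinPre (evalMap X) k :=
  ⟨(fun i => pathFold X (a.1.1 i, shrinkParam s), fun i => joinWeight k (weightParam s) (a.1.2 i)),
    fun i j => by
      have h : a.1.1 i 0 = a.1.1 j 0 := congrArg Prod.fst (a.2.1 i j)
      rw [evalMap_pathFold, evalMap_pathFold, h],
    sum_joinWeight _ a.2.2⟩

variable {X k}

lemma joinRel_foldToConstPre {a b : JoinPre (evalMap X) k} (h : joinRel (evalMap X) k a b)
    (s : I) : joinRel (evalMap X) k (foldToConstPre X k a s) (foldToConstPre X k b s) := by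
  refine ⟨by simp only [foldToConstPre, h.1], fun i hi => ?_⟩
  show pathFold X (a.1.1 i, shrinkParam s) = pathFold X (b.1.1 i, shrinkParam s)
  by_cases ha : a.1.2 i = 0
  · -- a vanishing weight only becomes nonzero once all paths are constant
    have hw : weightParam s ≠ 1 := fun hw => hi (by simp [foldToConstPre, hw, joinWeight_one, ha])
    obtain ⟨j, hj⟩ := a.exists_ne_zero
    have hbase : a.1.1 i 0 = b.1.1 i 0 := calc
      a.1.1 i 0 = a.1.1 j 0 := congrArg Prod.fst (a.2.1 i j)
      _ = b.1.1 j 0 := by rw [h.2 j hj]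
      _ = b.1.1 i 0 := congrArg Prod.fst (b.2.1 j i)
    rw [shrinkParam_eq_zero_of_weightParam_ne_one hw, pathFold_zero, pathFold_zero, hbase]
  · rw [h.2 i ha]

def foldToConstPreC : C(JoinPre (evalMap X) k × I, FibredJoin (evalMap X) k) :=
  ⟨fun q => Quot.mk _ (foldToConstPre X k q.1 q.2), by
    refine continuous_quot_mk.comp (Continuous.subtype_mk (.prodMk ?_ ?_) _)
    · exact continuous_pi fun i => (pathFold X).continuous.comp
        (.prodMk (by fun_prop) (continuous_shrinkParam.comp continuous_snd))
    · refine continuous_pi fun i => Continuous.subtype_mk ?_ _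
      have := continuous_weightParam.comp (continuous_snd (X := JoinPre (evalMap X) k))
      fun_prop⟩

variable (X k)

def foldToConst : FibredJoin (evalMap X) k → C(I, FibredJoin (evalMap X) k) :=
  Quot.lift (fun a => (foldToConstPreC (X := X) (k := k)).curry a)
    fun _ _ h => ContinuousMap.ext fun s => Quot.sound (joinRel_foldToConstPre h s)

variable {X k}

@[fun_prop]
lemma continuous_foldToConst : Continuous (foldToConst X k) :=
  isQuotientMap_quot_mk.continuous_iff.mpr (foldToConstPreC (X := X) (k := k)).curry.continuous

lemma foldToConst_mk (a : JoinPre (evalMap X) k) (s : I) :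
    foldToConst X k (Quot.mk _ a) s = Quot.mk _ (foldToConstPre X k a s) :=
  rfl

lemma joinProj_foldToConst (z : FibredJoin (evalMap X) k) (s : I) :
    joinProj (evalMap X) k (foldToConst X k z s) =
      ((joinProj (evalMap X) k z).1, (joinProj (evalMap X) k z).1) := by
  obtain ⟨a, rfl⟩ := Quot.exists_rep z
  exact evalMap_pathFold _ _

lemma foldToConst_zero {z : FibredJoin (evalMap X) k} (hz : joinInvol X k z = z) :
    foldToConst X k z 0 = z := by
  obtain ⟨a, rfl⟩ := Quot.exists_rep z
  have hrev := (joinRel_equivalence _ k).eqvGen_iff.mp (Quot.eqvGen_exact hz)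
  have hw : weightParam 0 = 1 := projIcc_of_right_le _ (by norm_num)
  have hu : shrinkParam 0 = 1 := projIcc_of_right_le _ (by norm_num)
  refine foldToConst_mk a 0 ▸ Quot.sound ⟨?_, fun i hi => ?_⟩
  · simp [foldToConstPre, hw, joinWeight_one]
  · have hai : a.1.2 i ≠ 0 := by simpa [foldToConstPre, hw, joinWeight_one] using hi
    show pathFold X (a.1.1 i, shrinkParam 0) = a.1.1 i
    rw [hu, pathFold_one_of_pathRev_eq (hrev.2 i (hrev.1 ▸ hai))]

lemma foldToConst_one (d : {p : X × X // p.1 = p.2}) {z : FibredJoin (evalMap X) k}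
    (hz : joinProj (evalMap X) k z = d) : foldToConst X k z 1 = joinConstSection X k d := by
  obtain ⟨a, rfl⟩ := Quot.exists_rep z
  have hw : weightParam 1 = 0 := projIcc_of_le_left _ (by norm_num)
  have hu : shrinkParam 1 = 0 := projIcc_of_le_left _ (by norm_num)
  refine foldToConst_mk a 1 ▸ Quot.sound ⟨?_, fun i _ => ?_⟩
  · ext i
    simp [foldToConstPre, hw, coe_joinWeight_zero]
  · show pathFold X (a.1.1 i, shrinkParam 1) = ContinuousMap.const I d.1.1
    rw [hu, pathFold_zero, ← congrArg Prod.fst hz]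
    exact congrArg (ContinuousMap.const I) (congrArg Prod.fst (a.2.1 i 0))

end FoldToConst

theorem section_of_fibred_join_homotopic_const_general
    (X : Type*) [TopologicalSpace X] (k : ℕ)
    (sec : C(X × X, FibredJoin (evalMap X) k))
    (hsec : ∀ q, joinProj (evalMap X) k (sec q) = q)
    (hequiv : ∀ q, sec (Prod.swap q) = joinInvol X k (sec q)) :
    ∃ F : C({p : X × X // p.1 = p.2} × I, FibredJoin (evalMap X) k),
      (∀ d, F (d, 0) = sec d) ∧
      (∀ d, F (d, 1) = joinConstSection X k d) ∧
      (∀ d t, joinProj (evalMap X) k (F (d, t)) = (d : X × X)) := by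
  have hswap (d : {p : X × X // p.1 = p.2}) : Prod.swap (d : X × X) = d := Prod.ext d.2.symm d.2
  refine ⟨⟨fun q => foldToConst X k (sec q.1) q.2, by fun_prop⟩, fun d => ?_, fun d => ?_,
    fun d t => ?_⟩
  · exact foldToConst_zero (by rw [← hequiv, hswap])
  · exact foldToConst_one d (hsec d)
  · rw [ContinuousMap.coe_mk, joinProj_foldToConst, hsec]
    exact Prod.ext rfl d.2

/-- Let `X` be a paracompact ENR and `σ` an equivariant section of the
`(k+1)`-fold fibred join of the path fibration. Then over the diagonal, `σ` is homotopic
through sections to the canonical constant-path section. -/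
theorem section_of_fibred_join_homotopic_const
    (X : Type*) [TopologicalSpace X] [ParacompactSpace X] (hX : IsENR X) (k : ℕ)
    (sec : C(X × X, FibredJoin (evalMap X) k))
    (hsec : ∀ q, joinProj (evalMap X) k (sec q) = q)
    (hequiv : ∀ q, sec (Prod.swap q) = joinInvol X k (sec q)) :
    ∃ F : C({p : X × X // p.1 = p.2} × I, FibredJoin (evalMap X) k),
      (∀ d, F (d, 0) = sec d) ∧
      (∀ d, F (d, 1) = joinConstSection X k d) ∧
      (∀ d t, joinProj (evalMap X) k (F (d, t)) = (d : X × X)) :=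
  section_of_fibred_join_homotopic_const_general X k sec hsec hequiv
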